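/- Let θ be irrational, A_θ the irrational rotation algebra with generators u, v (uv = e^{2πiθ}vu), τ its unique trace, and π the GNS representation on L²(A_θ, τ). Let a ∈ π(A_θ)'' be a self-adjoint operator generating the same von Neumann algebra as π(u) (i.e., {a}'' = {π(u), π(u)*}''), and let b be a non-scalar self-adjoint element of {π(v), π(v)*}''. Then a + i b is irreducible in the factor π(A_θ)'': every projection p ∈ π(A_θ)'' commuting with a + ib is 0 or I. -/

import Mathlib

/-
Write `e (m, n) = uᵐ vⁿ ξ` and `ζ = e^{2πiθ}`. The right multiplications by `u` and `v` lie in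
the commutant of `M`, so an operator `x` of `M` is determined by `x ξ`:
`⟪e (m', n'), x (e (m, n))⟫ = ζ ^ ((n - n') m) ⟪e (m' - m, n' - n), x ξ⟫`.
A projection commuting with `a + i b` commutes with `a` and `b`, hence with `u`; this puts `p ξ`
in the closed span of the `e (k, 0)`, and likewise `b ∈ {v}''` puts `b ξ` in that of the
`e (0, j)`, with some `⟪e (0, j), b ξ⟫ ≠ 0`, `j ≠ 0`, as `b` is not scalar. The `e (k, j)`
coefficient of `p b ξ = b p ξ` then reads
`⟪e (k, 0), p ξ⟫ ⟪e (0, j), b ξ⟫ = ζ ^ (-jk) ⟪e (0, j), b ξ⟫ ⟪e (k, 0), p ξ⟫`, and since `ζ` is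
not a root of unity `p ξ` is a multiple of `ξ`, i.e. `p` is a scalar idempotent.
-/

open ContinuousLinearMap
open scoped InnerProductSpace Real

noncomputable section

namespace Stmt

variable {H : Type} [NormedAddCommGroup H] [InnerProductSpace ℂ H] [CompleteSpace H]

/-- The commutant of a set of bounded operators. -/
def comm (S : Set (H →L[ℂ] H)) : Set (H →L[ℂ] H) := {y | ∀ x ∈ S, x * y = y * x}

/-- An orthogonal projection. -/
def IsProjection (p : H →L[ℂ] H) : Prop := IsSelfAdjoint p ∧ p * p = p

end Stmt

namespace HilbertBasis

variable {ι 𝕜 E : Type*} [RCLike 𝕜] [NormedAddCommGroup E] [InnerProductSpace 𝕜 E]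
  (b : HilbertBasis ι 𝕜 E)

theorem orthonormal_smul_comp (σ : ι ≃ ι) {c : ι → 𝕜} (hc : ∀ i, ‖c i‖ = 1) :
    Orthonormal 𝕜 fun i => c i • b (σ i) := by
  classical
  rw [orthonormal_iff_ite]
  intro i j
  rw [inner_smul_left, inner_smul_right, orthonormal_iff_ite.mp b.orthonormal, σ.injective.eq_iff]
  split_ifs with h
  · subst h
    rw [mul_one, RCLike.conj_mul, hc, RCLike.ofReal_one, one_pow]
  · rw [mul_zero, mul_zero]

theorem dense_span_smul_comp (σ : ι ≃ ι) {c : ι → 𝕜} (hc : ∀ i, ‖c i‖ = 1) :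
    ⊤ ≤ (Submodule.span 𝕜 (Set.range fun i => c i • b (σ i))).topologicalClosure := by
  have hspan : Submodule.span 𝕜 (Set.range b) ≤
      Submodule.span 𝕜 (Set.range fun i => c i • b (σ i)) := by
    refine Submodule.span_le.mpr ?_
    rintro _ ⟨j, rfl⟩
    have hcj : c (σ.symm j) ≠ 0 := norm_ne_zero_iff.mp (by rw [hc]; exact one_ne_zero)
    have : b j = (c (σ.symm j))⁻¹ • (c (σ.symm j) • b (σ (σ.symm j))) := by
      rw [smul_smul, inv_mul_cancel₀ hcj, one_smul, σ.apply_symm_apply]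
    rw [this]
    exact Submodule.smul_mem _ _ (Submodule.subset_span ⟨_, rfl⟩)
  exact b.dense_span.symm.le.trans (Submodule.topologicalClosure_mono hspan)

theorem eq_inner_smul_of_inner_eq_zero {x : E} (i₀ : ι) (h : ∀ i ≠ i₀, ⟪b i, x⟫_𝕜 = 0) :
    x = ⟪b i₀, x⟫_𝕜 • b i₀ := by
  have hsum := (b.hasSum_repr x).tsum_eq
  rwa [tsum_eq_single i₀ fun i hi => by rw [b.repr_apply_apply, h i hi, zero_smul],
    b.repr_apply_apply, eq_comm] at hsum

theorem inner_map_eq_of_forall_ne (T : E →L[𝕜] E) {y z : E} (i₀ : ι)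
    (h : ∀ i ≠ i₀, ⟪y, T (b i)⟫_𝕜 * ⟪b i, z⟫_𝕜 = 0) :
    ⟪y, T z⟫_𝕜 = ⟪y, T (b i₀)⟫_𝕜 * ⟪b i₀, z⟫_𝕜 := by
  have hsum := (b.hasSum_repr z).mapL ((innerSL 𝕜 y).comp T)
  simp only [ContinuousLinearMap.comp_apply, innerSL_apply_apply, map_smul,
    b.repr_apply_apply, smul_eq_mul] at hsum
  rw [← hsum.tsum_eq, tsum_eq_single i₀ fun i hi => ?_, mul_comm]
  rw [mul_comm, h i hi]

theorem ext_continuousLinearMap {f g : E →L[𝕜] E} (h : ∀ i, f (b i) = g (b i)) : f = g :=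
  ContinuousLinearMap.ext_on (Submodule.dense_iff_topologicalClosure_eq_top.mpr b.dense_span)
    (by rintro _ ⟨i, rfl⟩; exact h i)

variable [CompleteSpace E]

def phaseShift (σ : ι ≃ ι) (c : ι → 𝕜) (hc : ∀ i, ‖c i‖ = 1) : E ≃ₗᵢ[𝕜] E :=
  b.repr.trans
    (HilbertBasis.mk (b.orthonormal_smul_comp σ hc) (b.dense_span_smul_comp σ hc)).repr.symm

theorem phaseShift_apply (σ : ι ≃ ι) {c : ι → 𝕜} (hc : ∀ i, ‖c i‖ = 1) (i : ι) :
    b.phaseShift σ c hc (b i) = c i • b (σ i) := by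
  classical
  simp only [phaseShift, LinearIsometryEquiv.trans_apply, b.repr_self,
    HilbertBasis.repr_symm_single, HilbertBasis.coe_mk]

end HilbertBasis

theorem inner_map_apply_map_of_commute_unitary {𝕜 E : Type*} [RCLike 𝕜] [NormedAddCommGroup E]
    [InnerProductSpace 𝕜 E] [CompleteSpace E] {x : E →L[𝕜] E} {u : unitary (E →L[𝕜] E)}
    (h : Commute x u) (y z : E) :
    ⟪(u : E →L[𝕜] E) y, x ((u : E →L[𝕜] E) z)⟫_𝕜 = ⟪y, x z⟫_𝕜 := by
  rw [show x ((u : E →L[𝕜] E) z) = (u : E →L[𝕜] E) (x z) from DFunLike.congr_fun h.eq z,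
    Unitary.inner_map_map]

theorem Commute.of_add_I_smul {A : Type*} [Ring A] [StarRing A] [Algebra ℂ A] [StarModule ℂ A]
    {p a b : A} (ha : IsSelfAdjoint a) (hb : IsSelfAdjoint b) (hp : IsSelfAdjoint p)
    (h : Commute p (a + Complex.I • b)) : Commute p a ∧ Commute p b := by
  have h' : Commute p (a - Complex.I • b) := by
    simpa [star_add, star_smul, ha.star_eq, hb.star_eq, hp.star_eq, sub_eq_add_neg]
      using h.star_star
  refine ⟨?_, ?_⟩
  · convert (h.add_right h').smul_right (2⁻¹ : ℂ) using 1
    rw [add_add_sub_cancel, ← two_smul ℂ a, smul_smul, inv_mul_cancel₀ two_ne_zero, one_smul]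
  · convert (h.sub_right h').smul_right (-(2⁻¹ * Complex.I)) using 1
    rw [add_sub_sub_cancel, ← two_smul ℂ, smul_smul, smul_smul,
      show -(2⁻¹ * Complex.I) * 2 * Complex.I = 1 by linear_combination (-1 : ℂ) * Complex.I_sq,
      one_smul]

theorem Commute.star_right_of_unitary {R : Type*} [Monoid R] [StarMul R] {x : R}
    (u : unitary R) (h : Commute x u) : Commute x (star (u : R)) := by
  simpa [← Unitary.star_eq_inv] using (h.symm.units_inv_left (u := Unitary.toUnits u)).symm

theorem mem_centralizer_of_commute_unitary {R : Type*} [Monoid R] [StarMul R] {u v : unitary R}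
    {y : R} (hu : Commute y u) (hv : Commute y v) :
    y ∈ Set.centralizer {(u : R), (v : R), star (u : R), star (v : R)} := by
  simp only [Set.mem_centralizer_iff, Set.mem_insert_iff, Set.mem_singleton_iff,
    forall_eq_or_imp, forall_eq]
  exact ⟨hu.symm.eq, hv.symm.eq, (hu.star_right_of_unitary).symm.eq,
    (hv.star_right_of_unitary).symm.eq⟩

theorem Commute.of_mem_centralizer_centralizer_unitary {R : Type*} [Monoid R] [StarMul R]
    {v : unitary R} {y : R} (hy : y ∈ Set.centralizer (Set.centralizer {(v : R), star (v : R)})) :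
    Commute y v :=
  (hy _ <| by
    rintro _ (rfl | rfl)
    exacts [rfl, (commute_unitary_star_self v.prop).eq]).symm

theorem Set.mem_centralizer_of_centralizer_centralizer_eq {M : Type*} [Mul M] {a p : M}
    {S : Set M} (h : centralizer (centralizer {a}) = centralizer (centralizer S))
    (hp : Commute p a) : p ∈ centralizer S := by
  rw [← centralizer_centralizer_centralizer S, ← h, centralizer_centralizer_centralizer,
    mem_centralizer_iff]
  rintro _ rfl
  exact hp.symm.eq

theorem algebraMap_eq_zero_or_one_of_isIdempotentElem {K A : Type*} [Field K] [Ring A]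
    [Nontrivial A] [Algebra K A] {c : K} (h : IsIdempotentElem (algebraMap K A c)) :
    algebraMap K A c = 0 ∨ algebraMap K A c = 1 := by
  have hc : IsIdempotentElem c := (algebraMap K A).injective (by rw [map_mul]; exact h)
  rcases IsIdempotentElem.iff_eq_zero_or_one.mp hc with rfl | rfl
  · exact .inl (map_zero _)
  · exact .inr (map_one _)

theorem norm_exp_two_pi_I_mul (θ : ℝ) : ‖Complex.exp (2 * π * Complex.I * θ)‖ = 1 := by
  rw [show 2 * π * Complex.I * θ = ((2 * π * θ : ℝ) : ℂ) * Complex.I by push_cast; ring]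
  exact Complex.norm_exp_ofReal_mul_I _

theorem Irrational.exp_two_pi_I_mul_zpow_eq_one {θ : ℝ} (hθ : Irrational θ) {t : ℤ}
    (h : Complex.exp (2 * π * Complex.I * θ) ^ t = 1) : t = 0 := by
  by_contra ht
  rw [← Complex.exp_int_mul, Complex.exp_eq_one_iff] at h
  obtain ⟨n, hn⟩ := h
  have : θ * t = n := by
    have h2 : ((θ * t : ℝ) : ℂ) * (2 * π * Complex.I) = (n : ℂ) * (2 * π * Complex.I) := by
      push_cast; linear_combination hn
    exact_mod_cast mul_right_cancel₀ (by simp [Real.pi_ne_zero]) h2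
  exact (hθ.mul_intCast ht).ne_int n this

theorem eq_zero_of_zpow_mul_eq {ζ c : ℂ} (hζ : ∀ t : ℤ, ζ ^ t = 1 → t = 0) {t : ℤ} (ht : t ≠ 0)
    (h : ζ ^ t * c = c) : c = 0 := by
  have : (ζ ^ t - 1) * c = 0 := by rw [sub_mul, h, one_mul, sub_self]
  exact (mul_eq_zero.mp this).resolve_left fun h1 => ht (hζ t (sub_eq_zero.mp h1))

theorem Int.eq_zpow_mul_of_add_one {F : ℤ → ℂ} {w : ℂ} (hw : w ≠ 0)
    (h : ∀ t, F (t + 1) = w * F t) (t : ℤ) : F t = w ^ t * F 0 := by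
  induction t using Int.induction_on with
  | zero => simp
  | succ k ih => rw [h, ih, zpow_add_one₀ hw]; ring
  | pred k ih =>
    have h' := h (-k - 1)
    rw [sub_add_cancel, ih] at h'
    rw [zpow_sub_one₀ hw, mul_comm _ w⁻¹, mul_assoc, h', inv_mul_cancel_left₀ hw]

section RotationRelation

variable {A : Type*} [Ring A] [StarRing A] [Algebra ℂ A] {u v : unitary A} {ζ : ℂ}

theorem mul_unitary_zpow_of_mul_eq_smul (hζ : ζ ≠ 0) (h : (u : A) * v = ζ • ((v : A) * u))
    (m : ℤ) : (v : A) * ↑(u ^ m) = ζ ^ (-m) • (↑(u ^ m) * (v : A)) := by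
  have hvu : (v : A) * u = ζ⁻¹ • ((u : A) * v) := by
    rw [h, smul_smul, inv_mul_cancel₀ hζ, one_smul]
  have hvu' : (v : A) * star (u : A) = ζ • (star (u : A) * v) := by
    calc (v : A) * star (u : A) = star (u : A) * (u * v) * star (u : A) := by
          rw [← mul_assoc, Unitary.star_mul_self_of_mem u.prop, one_mul]
      _ = ζ • (star (u : A) * v) := by
          rw [h, mul_smul_comm, smul_mul_assoc, mul_assoc, mul_assoc,
            Unitary.mul_star_self_of_mem u.prop, mul_one]
  induction m using Int.induction_on with
  | zero => simp
  | succ k ih =>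
    rw [zpow_add_one, Submonoid.coe_mul, ← mul_assoc, ih, smul_mul_assoc, mul_assoc, hvu,
      mul_smul_comm, smul_smul, ← zpow_sub_one₀ hζ, ← mul_assoc]
    congr 2
    ring
  | pred k ih =>
    rw [zpow_sub_one, Submonoid.coe_mul, ← Unitary.star_eq_inv, Unitary.coe_star, ← mul_assoc,
      ih, smul_mul_assoc, mul_assoc, hvu', mul_smul_comm, smul_smul, ← zpow_add_one₀ hζ,
      ← mul_assoc]
    congr 2
    ring

theorem mul_unitary_zpow_mul_zpow_of_mul_eq_smul (hζ : ζ ≠ 0)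
    (h : (u : A) * v = ζ • ((v : A) * u)) (m n : ℤ) :
    (v : A) * ↑(u ^ m * v ^ n) = ζ ^ (-m) • ↑(u ^ m * v ^ (n + 1)) := by
  rw [Submonoid.coe_mul, ← mul_assoc, mul_unitary_zpow_of_mul_eq_smul hζ h, smul_mul_assoc,
    mul_assoc, ← Submonoid.coe_mul _ v, ← zpow_one_add, add_comm, ← Submonoid.coe_mul]

end RotationRelation

theorem unitary_mul_zpow_mul_zpow {R : Type*} [Monoid R] [StarMul R] (u v : unitary R)
    (m n : ℤ) : (u : R) * ↑(u ^ m * v ^ n) = ↑(u ^ (m + 1) * v ^ n) := by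
  rw [← Submonoid.coe_mul, ← mul_assoc, ← zpow_one_add, add_comm]

theorem exists_hilbertBasis_of_mul_eq_smul {H : Type*} [NormedAddCommGroup H]
    [InnerProductSpace ℂ H] [CompleteSpace H] {U V : unitary (H →L[ℂ] H)} {ξ : H}
    (honb : Orthonormal ℂ fun mn : ℤ × ℤ => ((U ^ mn.1 * V ^ mn.2 : unitary (H →L[ℂ] H)) :
      H →L[ℂ] H) ξ)
    (htotal : Dense (Submodule.span ℂ (Set.range fun mn : ℤ × ℤ =>
      ((U ^ mn.1 * V ^ mn.2 : unitary (H →L[ℂ] H)) : H →L[ℂ] H) ξ) : Set H))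
    {ζ : ℂ} (hζ : ζ ≠ 0) (h : (U : H →L[ℂ] H) * V = ζ • ((V : H →L[ℂ] H) * U)) :
    ∃ e : HilbertBasis (ℤ × ℤ) ℂ H, (∀ m n, (U : H →L[ℂ] H) (e (m, n)) = e (m + 1, n)) ∧
      ∀ m n, (V : H →L[ℂ] H) (e (m, n)) = ζ ^ (-m) • e (m, n + 1) := by
  let e := HilbertBasis.mk honb (Submodule.dense_iff_topologicalClosure_eq_top.mp htotal).ge
  have he : ∀ m n, e (m, n) = ((U ^ m * V ^ n : unitary (H →L[ℂ] H)) : H →L[ℂ] H) ξ :=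
    fun m n => congrFun (HilbertBasis.coe_mk _ _) (m, n)
  refine ⟨e, fun m n => ?_, fun m n => ?_⟩ <;> rw [he, he]
  · exact DFunLike.congr_fun (unitary_mul_zpow_mul_zpow U V m n) ξ
  · exact DFunLike.congr_fun (mul_unitary_zpow_mul_zpow_of_mul_eq_smul hζ h m n) ξ

namespace RotationBasis

variable {H : Type*} [NormedAddCommGroup H] [InnerProductSpace ℂ H] [CompleteSpace H]
  (e : HilbertBasis (ℤ × ℤ) ℂ H) {ζ : ℂ} (hζ : ‖ζ‖ = 1)

/-- Right multiplication by `u` when `e (m, n) = uᵐ vⁿ ξ` and `v u = ζ⁻¹ u v`. -/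
def rightU : unitary (H →L[ℂ] H) :=
  Unitary.linearIsometryEquiv.symm <|
    e.phaseShift (Equiv.prodCongr (Equiv.addRight 1) (Equiv.refl ℤ)) (fun i => ζ ^ (-i.2))
      fun i => by rw [norm_zpow, hζ, one_zpow]

/-- Right multiplication by `v` when `e (m, n) = uᵐ vⁿ ξ`. -/
def rightV : unitary (H →L[ℂ] H) :=
  Unitary.linearIsometryEquiv.symm <|
    e.phaseShift (Equiv.prodCongr (Equiv.refl ℤ) (Equiv.addRight 1)) (fun _ => 1)
      fun _ => norm_one

theorem rightU_apply (m n : ℤ) :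
    (rightU e hζ : H →L[ℂ] H) (e (m, n)) = ζ ^ (-n) • e (m + 1, n) :=
  e.phaseShift_apply _ (fun i => by rw [norm_zpow, hζ, one_zpow]) (m, n)

theorem rightV_apply (m n : ℤ) : (rightV e : H →L[ℂ] H) (e (m, n)) = e (m, n + 1) := by
  rw [← one_smul ℂ (e (m, n + 1))]
  exact e.phaseShift_apply _ (fun _ => norm_one) (m, n)

variable {e hζ}

theorem inner_map_eq_of_commute_right {x : H →L[ℂ] H} (hU : Commute x (rightU e hζ))
    (hV : Commute x (rightV e)) (m n m' n' : ℤ) :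
    ⟪e (m', n'), x (e (m, n))⟫_ℂ =
      ζ ^ ((n - n') * m) * ⟪e (m' - m, n' - n), x (e (0, 0))⟫_ℂ := by
  have hζ0 : ζ ≠ 0 := norm_ne_zero_iff.mp (by rw [hζ]; exact one_ne_zero)
  have stepV : ∀ m n m' n',
      ⟪e (m', n' + 1), x (e (m, n + 1))⟫_ℂ = ⟪e (m', n'), x (e (m, n))⟫_ℂ := fun m n m' n' => by
    simpa only [rightV_apply] using
      inner_map_apply_map_of_commute_unitary hV (e (m', n')) (e (m, n))
  have stepU : ∀ m n m' n', ⟪e (m' + 1, n'), x (e (m + 1, n))⟫_ℂ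
      = ζ ^ (n - n') * ⟪e (m', n'), x (e (m, n))⟫_ℂ := fun m n m' n' => by
    have h := inner_map_apply_map_of_commute_unitary hU (e (m', n')) (e (m, n))
    rw [rightU_apply, rightU_apply, map_smul, inner_smul_left, inner_smul_right,
      ← Complex.inv_eq_conj (by rw [norm_zpow, hζ, one_zpow]), ← zpow_neg, neg_neg] at h
    rw [← h, ← mul_assoc, ← mul_assoc, ← zpow_add₀ hζ0, ← zpow_add₀ hζ0,
      show n - n' + n' + -n = 0 by ring, zpow_zero, one_mul]
  have shiftV := Int.eq_zpow_mul_of_add_one one_ne_zero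
    (F := fun t => ⟪e (m', n' - n + t), x (e (m, t))⟫_ℂ)
    (fun t => by simpa only [one_mul, add_assoc] using stepV m t m' (n' - n + t)) n
  have shiftU := Int.eq_zpow_mul_of_add_one (zpow_ne_zero (n - n') hζ0)
    (F := fun t => ⟪e (m' - m + t, n' - n), x (e (t, 0))⟫_ℂ)
    (fun t => by
      simpa only [add_assoc, zero_sub, neg_sub] using stepU t 0 (m' - m + t) (n' - n)) m
  simp only [sub_add_cancel, one_zpow, one_mul, add_zero] at shiftV shiftU
  rw [shiftV, shiftU, ← zpow_mul]

theorem eq_smul_one_of_commute_right {x : H →L[ℂ] H} (hU : Commute x (rightU e hζ))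
    (hV : Commute x (rightV e)) (h0 : ∀ i ≠ (0, 0), ⟪e i, x (e (0, 0))⟫_ℂ = 0) :
    x = ⟪e (0, 0), x (e (0, 0))⟫_ℂ • 1 := by
  refine e.ext_continuousLinearMap fun ⟨m, n⟩ => ?_
  rw [e.eq_inner_smul_of_inner_eq_zero (x := x (e (m, n))) (m, n) fun ⟨m', n'⟩ hi => ?_]
  · rw [inner_map_eq_of_commute_right hU hV]
    simp
  · rw [inner_map_eq_of_commute_right hU hV, h0 _ fun h => hi ?_, mul_zero]
    simp only [Prod.mk.injEq, sub_eq_zero] at h ⊢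
    exact h

section LeftAction

variable {u v : unitary (H →L[ℂ] H)}

theorem rightU_mem_centralizer (hu : ∀ m n, (u : H →L[ℂ] H) (e (m, n)) = e (m + 1, n))
    (hv : ∀ m n, (v : H →L[ℂ] H) (e (m, n)) = ζ ^ (-m) • e (m, n + 1)) :
    (rightU e hζ : H →L[ℂ] H) ∈ Set.centralizer {(u : H →L[ℂ] H), (v : H →L[ℂ] H),
      star (u : H →L[ℂ] H), star (v : H →L[ℂ] H)} := by
  have hζ0 : ζ ≠ 0 := norm_ne_zero_iff.mp (by rw [hζ]; exact one_ne_zero)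
  refine mem_centralizer_of_commute_unitary
    (e.ext_continuousLinearMap fun ⟨m, n⟩ => ?_) (e.ext_continuousLinearMap fun ⟨m, n⟩ => ?_)
  · simp only [mul_apply_eq_comp, rightU_apply, hu, map_smul]
  · simp only [mul_apply_eq_comp, rightU_apply, hv, map_smul, smul_smul, ← zpow_add₀ hζ0]
    ring_nf

theorem rightV_mem_centralizer (hu : ∀ m n, (u : H →L[ℂ] H) (e (m, n)) = e (m + 1, n))
    (hv : ∀ m n, (v : H →L[ℂ] H) (e (m, n)) = ζ ^ (-m) • e (m, n + 1)) :
    (rightV e : H →L[ℂ] H) ∈ Set.centralizer {(u : H →L[ℂ] H), (v : H →L[ℂ] H),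
      star (u : H →L[ℂ] H), star (v : H →L[ℂ] H)} := by
  refine mem_centralizer_of_commute_unitary
    (e.ext_continuousLinearMap fun ⟨m, n⟩ => ?_) (e.ext_continuousLinearMap fun ⟨m, n⟩ => ?_)
  · simp only [mul_apply_eq_comp, rightV_apply, hu]
  · simp only [mul_apply_eq_comp, rightV_apply, hv, map_smul]

theorem inner_eq_zero_of_commute_left_u (hζ1 : ∀ t : ℤ, ζ ^ t = 1 → t = 0) {x : H →L[ℂ] H}
    (hU : Commute x (rightU e hζ)) (hV : Commute x (rightV e))
    (hu : ∀ m n, (u : H →L[ℂ] H) (e (m, n)) = e (m + 1, n)) (hxu : Commute x u)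
    (k : ℤ) {l : ℤ} (hl : l ≠ 0) : ⟪e (k, l), x (e (0, 0))⟫_ℂ = 0 := by
  have h := inner_map_apply_map_of_commute_unitary hxu (e (k, l)) (e (0, 0))
  rw [hu, hu, inner_map_eq_of_commute_right hU hV] at h
  simp only [zero_add, zero_sub, mul_one, add_sub_cancel_right, sub_zero] at h
  exact eq_zero_of_zpow_mul_eq hζ1 (neg_ne_zero.mpr hl) h

theorem inner_eq_zero_of_commute_left_v (hζ1 : ∀ t : ℤ, ζ ^ t = 1 → t = 0) {x : H →L[ℂ] H}
    (hU : Commute x (rightU e hζ)) (hV : Commute x (rightV e))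
    (hv : ∀ m n, (v : H →L[ℂ] H) (e (m, n)) = ζ ^ (-m) • e (m, n + 1)) (hxv : Commute x v)
    {k : ℤ} (hk : k ≠ 0) (l : ℤ) : ⟪e (k, l), x (e (0, 0))⟫_ℂ = 0 := by
  have h := inner_map_apply_map_of_commute_unitary hxv (e (k, l)) (e (0, 0))
  rw [hv, hv, map_smul, inner_smul_left, inner_smul_right, inner_map_eq_of_commute_right hU hV,
    ← Complex.inv_eq_conj (by rw [norm_zpow, hζ, one_zpow]), ← zpow_neg, neg_neg] at h
  simp only [neg_zero, zpow_zero, one_mul, mul_zero, sub_zero, zero_add,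
    add_sub_cancel_right] at h
  exact eq_zero_of_zpow_mul_eq hζ1 hk h

end LeftAction

theorem inner_eq_zero_of_commute_of_inner_ne_zero (hζ1 : ∀ t : ℤ, ζ ^ t = 1 → t = 0) {p b : H →L[ℂ] H}
    (hpU : Commute p (rightU e hζ)) (hpV : Commute p (rightV e))
    (hbU : Commute b (rightU e hζ)) (hbV : Commute b (rightV e))
    (hp0 : ∀ k l, l ≠ 0 → ⟪e (k, l), p (e (0, 0))⟫_ℂ = 0)
    (hb0 : ∀ k l, k ≠ 0 → ⟪e (k, l), b (e (0, 0))⟫_ℂ = 0) (hpb : Commute p b)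
    {j : ℤ} (hj : j ≠ 0) (hbj : ⟪e (0, j), b (e (0, 0))⟫_ℂ ≠ 0) {k : ℤ} (hk : k ≠ 0) :
    ⟪e (k, 0), p (e (0, 0))⟫_ℂ = 0 := by
  have hpb_e : ⟪e (k, j), p (b (e (0, 0)))⟫_ℂ
      = ⟪e (k, 0), p (e (0, 0))⟫_ℂ * ⟪e (0, j), b (e (0, 0))⟫_ℂ := by
    rw [e.inner_map_eq_of_forall_ne p (0, j) fun ⟨m, n⟩ hi => ?_]
    · rw [inner_map_eq_of_commute_right hpU hpV]
      simp
    · by_cases hm : m = 0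
      · subst hm
        rw [inner_map_eq_of_commute_right hpU hpV, hp0 _ _ (sub_ne_zero.mpr fun h => hi ?_)]
        · simp
        · rw [h]
      · rw [hb0 _ _ hm, mul_zero]
  have hbp_e : ⟪e (k, j), b (p (e (0, 0)))⟫_ℂ
      = ζ ^ (-(j * k)) * (⟪e (0, j), b (e (0, 0))⟫_ℂ * ⟪e (k, 0), p (e (0, 0))⟫_ℂ) := by
    rw [e.inner_map_eq_of_forall_ne b (k, 0) fun ⟨m, n⟩ hi => ?_]
    · rw [inner_map_eq_of_commute_right hbU hbV]
      simp [mul_assoc]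
    · by_cases hn : n = 0
      · subst hn
        rw [inner_map_eq_of_commute_right hbU hbV, hb0 _ _ (sub_ne_zero.mpr fun h => hi ?_)]
        · simp
        · rw [h]
      · rw [hp0 _ _ hn, mul_zero]
  have hpb_ξ : p (b (e (0, 0))) = b (p (e (0, 0))) := DFunLike.congr_fun hpb.eq _
  have key := eq_zero_of_zpow_mul_eq hζ1 (neg_ne_zero.mpr (mul_ne_zero hj hk))
    (by rw [← hbp_e, ← hpb_ξ, hpb_e, mul_comm])
  exact (mul_eq_zero.mp key).resolve_left hbj

theorem eq_zero_or_one_of_mem_centralizer (hζ : ‖ζ‖ = 1) (hζ1 : ∀ t : ℤ, ζ ^ t = 1 → t = 0)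
    {u v : unitary (H →L[ℂ] H)} (hu : ∀ m n, (u : H →L[ℂ] H) (e (m, n)) = e (m + 1, n))
    (hv : ∀ m n, (v : H →L[ℂ] H) (e (m, n)) = ζ ^ (-m) • e (m, n + 1)) {p b : H →L[ℂ] H}
    (hp : p ∈ Set.centralizer (Set.centralizer {(u : H →L[ℂ] H), (v : H →L[ℂ] H),
      star (u : H →L[ℂ] H), star (v : H →L[ℂ] H)}))
    (hpu : Commute p u) (hpp : IsIdempotentElem p)
    (hb : b ∈ Set.centralizer (Set.centralizer {(v : H →L[ℂ] H), star (v : H →L[ℂ] H)}))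
    (hbns : ¬ ∃ c : ℂ, b = c • (1 : H →L[ℂ] H)) (hpb : Commute p b) : p = 0 ∨ p = 1 := by
  have hR := rightU_mem_centralizer (hζ := hζ) hu hv
  have hS := rightV_mem_centralizer hu hv
  have hsub : ({(v : H →L[ℂ] H), star (v : H →L[ℂ] H)} : Set (H →L[ℂ] H)) ⊆
      {(u : H →L[ℂ] H), (v : H →L[ℂ] H), star (u : H →L[ℂ] H), star (v : H →L[ℂ] H)} := by
    simp [Set.insert_subset_iff]
  have hpR : Commute p (rightU e hζ) := (hp _ hR).symm
  have hpS : Commute p (rightV e) := (hp _ hS).symm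
  have hbR : Commute b (rightU e hζ) := (hb _ (Set.centralizer_subset hsub hR)).symm
  have hbS : Commute b (rightV e) := (hb _ (Set.centralizer_subset hsub hS)).symm
  have hp0 : ∀ k l, l ≠ 0 → ⟪e (k, l), p (e (0, 0))⟫_ℂ = 0 := fun k _ hl =>
    inner_eq_zero_of_commute_left_u hζ1 hpR hpS hu hpu k hl
  have hb0 : ∀ k l, k ≠ 0 → ⟪e (k, l), b (e (0, 0))⟫_ℂ = 0 := fun _ l hk =>
    inner_eq_zero_of_commute_left_v hζ1 hbR hbS hv
      (Commute.of_mem_centralizer_centralizer_unitary hb) hk l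
  obtain ⟨j, hj, hbj⟩ : ∃ j ≠ 0, ⟪e (0, j), b (e (0, 0))⟫_ℂ ≠ 0 := by
    by_contra! h
    refine hbns ⟨_, eq_smul_one_of_commute_right hbR hbS fun ⟨k, l⟩ hi => ?_⟩
    obtain rfl | hk := eq_or_ne k 0
    exacts [h l fun hl => hi (by rw [hl]), hb0 k l hk]
  have hp_scalar := eq_smul_one_of_commute_right hpR hpS fun ⟨k, l⟩ hi => by
    obtain rfl | hl := eq_or_ne l 0
    exacts [inner_eq_zero_of_commute_of_inner_ne_zero hζ1 hpR hpS hbR hbS hp0 hb0 hpb hj hbj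
      fun hk => hi (by rw [hk]), hp0 k l hl]
  have : Nontrivial H := ⟨⟨_, 0, e.orthonormal.ne_zero (0, 0)⟩⟩
  rw [hp_scalar, ← Algebra.algebraMap_eq_smul_one] at hpp ⊢
  exact algebraMap_eq_zero_or_one_of_isIdempotentElem hpp

end RotationBasis

open Stmt in
theorem rotation_algebra_sum_irreducible_general
    {H : Type} [NormedAddCommGroup H] [InnerProductSpace ℂ H] [CompleteSpace H]
    (θ : ℝ) (hθ : Irrational θ)
    (U V : unitary (H →L[ℂ] H))
    (hcomm : (U : H →L[ℂ] H) * V = Complex.exp (2 * π * Complex.I * θ) •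
      ((V : H →L[ℂ] H) * U))
    (M : VonNeumannAlgebra H)
    (hMgen : (M : Set (H →L[ℂ] H)) =
      comm (comm {(U : H →L[ℂ] H), (V : H →L[ℂ] H),
        star (U : H →L[ℂ] H), star (V : H →L[ℂ] H)}))
    (ξ : H)
    (honb : Orthonormal ℂ (fun mn : ℤ × ℤ =>
      (((U ^ mn.1) * (V ^ mn.2) : unitary (H →L[ℂ] H)) : H →L[ℂ] H) ξ))
    (htotal : Dense (Submodule.span ℂ (Set.range (fun mn : ℤ × ℤ =>
      (((U ^ mn.1) * (V ^ mn.2) : unitary (H →L[ℂ] H)) : H →L[ℂ] H) ξ)) : Set H))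
    (a : H →L[ℂ] H) (haSA : IsSelfAdjoint a)
    (ha : comm (comm {a}) =
      comm (comm {(U : H →L[ℂ] H), star (U : H →L[ℂ] H)}))
    (b : H →L[ℂ] H) (hbSA : IsSelfAdjoint b)
    (hb : b ∈ comm (comm {(V : H →L[ℂ] H), star (V : H →L[ℂ] H)}))
    (hbns : ¬ ∃ c : ℂ, b = c • (1 : H →L[ℂ] H)) :
    ∀ p ∈ M, IsProjection p →
      p * (a + Complex.I • b) = (a + Complex.I • b) * p → p = 0 ∨ p = 1 := by
  intro p hpM ⟨hpSA, hpp⟩ hpab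
  obtain ⟨hpa, hpb⟩ := Commute.of_add_I_smul haSA hbSA hpSA hpab
  obtain ⟨e, hUe, hVe⟩ :=
    exists_hilbertBasis_of_mul_eq_smul honb htotal (Complex.exp_ne_zero _) hcomm
  have hpU : Commute p U :=
    (Set.mem_centralizer_of_centralizer_centralizer_eq ha hpa _ (Set.mem_insert _ _)).symm
  exact RotationBasis.eq_zero_or_one_of_mem_centralizer (norm_exp_two_pi_I_mul θ)
    (fun _ => hθ.exp_two_pi_I_mul_zpow_eq_one) hUe hVe (hMgen ▸ hpM : p ∈ comm (comm _)) hpU hpp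
    hb hbns hpb

open Stmt in
/-- Let `π` be the GNS representation of the irrational rotation algebra
`A_θ` with respect to its unique trace, realized on `H = L²(A_θ, τ)` with cyclic trace
vector `ξ` for which the monomials `π(u)^m π(v)^n ξ` form an orthonormal basis, and let
`M = π(A_θ)''`. If `a ∈ M` is self-adjoint with `{a}'' = {π(u), π(u)*}''` and `b` is a
non-scalar self-adjoint element of `{π(v), π(v)*}''`, then `a + i b` is irreducible in
`M`: every projection `p ∈ M` commuting with `a + ib` is `0` or `1`. -/
theorem rotation_algebra_sum_irreducible
    {H : Type} [NormedAddCommGroup H] [InnerProductSpace ℂ H] [CompleteSpace H]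
    [TopologicalSpace.SeparableSpace H]
    (θ : ℝ) (hθ : Irrational θ)
    (U V : unitary (H →L[ℂ] H))
    (hcomm : (U : H →L[ℂ] H) * V = Complex.exp (2 * π * Complex.I * θ) •
      ((V : H →L[ℂ] H) * U))
    (M : VonNeumannAlgebra H)
    (hMgen : (M : Set (H →L[ℂ] H)) =
      comm (comm {(U : H →L[ℂ] H), (V : H →L[ℂ] H),
        star (U : H →L[ℂ] H), star (V : H →L[ℂ] H)}))
    (ξ : H) (hξ : ‖ξ‖ = 1)
    (honb : Orthonormal ℂ (fun mn : ℤ × ℤ =>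
      (((U ^ mn.1) * (V ^ mn.2) : unitary (H →L[ℂ] H)) : H →L[ℂ] H) ξ))
    (htotal : Dense (Submodule.span ℂ (Set.range (fun mn : ℤ × ℤ =>
      (((U ^ mn.1) * (V ^ mn.2) : unitary (H →L[ℂ] H)) : H →L[ℂ] H) ξ)) : Set H))
    (a : H →L[ℂ] H) (haSA : IsSelfAdjoint a)
    (ha : comm (comm {a}) =
      comm (comm {(U : H →L[ℂ] H), star (U : H →L[ℂ] H)}))
    (b : H →L[ℂ] H) (hbSA : IsSelfAdjoint b)
    (hb : b ∈ comm (comm {(V : H →L[ℂ] H), star (V : H →L[ℂ] H)}))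
    (hbns : ¬ ∃ c : ℂ, b = c • (1 : H →L[ℂ] H)) :
    ∀ p ∈ M, IsProjection p →
      p * (a + Complex.I • b) = (a + Complex.I • b) * p → p = 0 ∨ p = 1 :=
  rotation_algebra_sum_irreducible_general θ hθ U V hcomm M hMgen ξ honb htotal a haSA ha b hbSA hb
    hbns
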